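/- Let f : ℝ → ℝ be continuous with |f(x)| ≤ a·cosh(b·x) for all x (a > 0, b ∈ ℝ), fix λ > 0 and x ∈ ℝ, and for a probability measure ρ on ℝ define the probability measure Σ_x^f(ρ) = Σ_{n=0}^∞ (e^{−λ} λ^n / n!) · (h_{n+1})_*(δ_x ∗ ρ^{∗n}), where h_k(y) = f(y)/k and (h_k)_* is the pushforward. Then ρ ↦ Σ_x^f(ρ) is sequentially continuous: if ∫ φ dρ_n → ∫ φ dρ for every continuous compactly supported φ : ℝ → ℝ, then ∫ φ dΣ_x^f(ρ_n) → ∫ φ dΣ_x^f(ρ) for every continuous compactly supported φ. The same holds for Σ^f(ρ) = Σ_{n=0}^∞ (e^{−λ} λ^n / n!) · (h_{n+1})_*(ρ^{∗(n+1)}). -/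

import Mathlib

open MeasureTheory Filter

/-- The `n`-fold convolution power of a measure on `ℝ`, with `ρ^{∗0} = δ₀`. -/
noncomputable def convPow (ρ : Measure ℝ) : ℕ → Measure ℝ
  | 0 => Measure.dirac 0
  | n + 1 => (convPow ρ n).conv ρ

/-- `Σ_x^f(ρ) = Σ_n (e^{−λ}λ^n/n!)·(h_{n+1})_*(δ_x ∗ ρ^{∗n})` with `h_k(y) = f(y)/k`. -/
noncomputable def sigmaX (f : ℝ → ℝ) (l x : ℝ) (ρ : Measure ℝ) : Measure ℝ :=
  Measure.sum (fun n : ℕ =>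
    ENNReal.ofReal (Real.exp (-l) * l ^ n / n.factorial) •
      ((Measure.dirac x).conv (convPow ρ n)).map (fun y => f y / ((n : ℝ) + 1)))

/-- `Σ^f(ρ) = Σ_n (e^{−λ}λ^n/n!)·(h_{n+1})_*(ρ^{∗(n+1)})` with `h_k(y) = f(y)/k`. -/
noncomputable def sigmaTot (f : ℝ → ℝ) (l : ℝ) (ρ : Measure ℝ) : Measure ℝ :=
  Measure.sum (fun n : ℕ =>
    ENNReal.ofReal (Real.exp (-l) * l ^ n / n.factorial) •
      (convPow ρ (n + 1)).map (fun y => f y / ((n : ℝ) + 1)))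

/-- Vague convergence: convergence of the integrals against every continuous
compactly supported test function. -/
def VagueTendsto (ρs : ℕ → Measure ℝ) (ρ : Measure ℝ) : Prop :=
  ∀ φ : ℝ → ℝ, Continuous φ → HasCompactSupport φ →
    Tendsto (fun n => ∫ x, φ x ∂(ρs n)) atTop (nhds (∫ x, φ x ∂ρ))

/-!
Vague convergence of probability measures on `ℝ` to a probability measure is already weak
convergence, because no mass escapes to infinity: testing against compactly supported cutoffs
`χₙ ↑ 1` gives `∫ f dρ ≤ liminf ∫ f dρₖ` for every bounded continuous `f ≥ 0`. Convolution is
weakly continuous, being the image of the product measure under addition, and so is the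
pushforward under each continuous `h_{n+1}`; hence every term of the Poisson mixture converges
weakly. As the integrands are bounded and the weights summable, dominated convergence passes
the limit through the series.
-/

open scoped ENNReal Topology BoundedContinuousFunction

namespace MeasureTheory.ProbabilityMeasure

section Convolution

variable {M : Type*} [AddMonoid M] [TopologicalSpace M] [ContinuousAdd M]
  [SecondCountableTopology M] [MeasurableSpace M] [BorelSpace M]

noncomputable def conv (μ ν : ProbabilityMeasure M) : ProbabilityMeasure M :=
  ⟨(μ : Measure M).conv ν, inferInstance⟩

theorem continuous_conv [TopologicalSpace.PseudoMetrizableSpace M] :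
    Continuous fun p : ProbabilityMeasure M × ProbabilityMeasure M => p.1.conv p.2 :=
  (continuous_map continuous_add).comp continuous_prod

end Convolution

section VagueConvergence

variable {E : Type*} [NormedAddCommGroup E] [NormedSpace ℝ E] [FiniteDimensional ℝ E]
  [MeasurableSpace E] [BorelSpace E]

theorem tendsto_of_forall_integral_hasCompactSupport_tendsto {ι : Type*} {L : Filter ι}
    [L.IsCountablyGenerated] {μs : ι → ProbabilityMeasure E} {μ : ProbabilityMeasure E}
    (h : ∀ φ : E → ℝ, Continuous φ → HasCompactSupport φ →
      Tendsto (fun i => ∫ x, φ x ∂(μs i : Measure E)) L (𝓝 (∫ x, φ x ∂(μ : Measure E)))) :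
    Tendsto μs L (𝓝 μ) := by
  rcases L.eq_or_neBot with rfl | hL
  · exact tendsto_bot
  rw [tendsto_iff_forall_integral_tendsto]
  refine BoundedContinuousFunction.tendsto_integral_of_forall_integral_le_liminf_integral
    fun f hf₀ => ?_
  have hf : ∀ x, 0 ≤ f x := hf₀
  let χ : ℕ → ContDiffBump (0 : E) := fun n =>
    ⟨n + 1, n + 2, by positivity, by linarith⟩
  have hfχ_le : ∀ n x, f x * χ n x ≤ f x := fun n x =>
    mul_le_of_le_one_right (hf x) (χ n).le_one
  have hlim : Tendsto (fun n => ∫ x, f x * χ n x ∂(μ : Measure E)) atTop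
      (𝓝 (∫ x, f x ∂(μ : Measure E))) := by
    refine tendsto_integral_of_dominated_convergence (fun _ => ‖f‖)
      (fun n => (f.continuous.mul (χ n).continuous).aestronglyMeasurable) (integrable_const _)
      (fun n => ae_of_all _ fun x => ?_) (ae_of_all _ fun x => ?_)
    · rw [Real.norm_eq_abs, abs_of_nonneg (mul_nonneg (hf x) (χ n).nonneg)]
      exact (hfχ_le n x).trans ((le_abs_self _).trans (f.norm_coe_le_norm x))
    · refine tendsto_const_nhds.congr' ?_
      filter_upwards [eventually_ge_atTop ⌈‖x‖⌉₊] with n hn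
      rw [(χ n).one_of_mem_closedBall (mem_closedBall_zero_iff.mpr ?_), mul_one]
      linarith [Nat.ceil_le.mp hn]
  refine le_of_tendsto' hlim fun n => ?_
  have hbdd := f.isBounded_range_integral (fun i => (μs i : Measure E))
  have hfχ : Continuous fun x => f x * χ n x := f.continuous.mul (χ n).continuous
  have hconv := h _ hfχ (χ n).hasCompactSupport.mul_left
  rw [← hconv.liminf_eq]
  refine liminf_le_liminf (Eventually.of_forall fun i => integral_mono ?_ (f.integrable _)
    (hfχ_le n)) hconv.isBoundedUnder_ge ?_
  · exact hfχ.integrable_of_hasCompactSupport (χ n).hasCompactSupport.mul_left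
  · exact (hbdd.bddAbove.isBoundedUnder_of_range).isCoboundedUnder_ge

end VagueConvergence

section Mixture

lemma isFiniteMeasure_sum_smul {X : Type*} [MeasurableSpace X] {w : ℕ → ℝ≥0∞}
    (hw : ∑' n, w n ≠ ∞) (μ : ℕ → ProbabilityMeasure X) :
    IsFiniteMeasure (Measure.sum fun n => w n • (μ n : Measure X)) := by
  constructor
  simpa [Measure.sum_apply _ MeasurableSet.univ] using hw.lt_top

variable {X : Type*} [TopologicalSpace X] [MeasurableSpace X] [OpensMeasurableSpace X]
  {w : ℕ → ℝ≥0∞}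

lemma integral_sum_smul (hw : ∑' n, w n ≠ ∞) (μ : ℕ → ProbabilityMeasure X) (g : X →ᵇ ℝ) :
    ∫ x, g x ∂(Measure.sum fun n => w n • (μ n : Measure X)) =
      ∑' n, (w n).toReal * ∫ x, g x ∂(μ n : Measure X) := by
  have := isFiniteMeasure_sum_smul hw μ
  rw [integral_sum_measure (g.integrable _)]
  simp only [integral_smul_measure, smul_eq_mul]

theorem tendsto_integral_sum_smul (hw : ∑' n, w n ≠ ∞) {ι : Type*} {L : Filter ι}
    {μs : ι → ℕ → ProbabilityMeasure X} {μ : ℕ → ProbabilityMeasure X}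
    (h : ∀ n, Tendsto (μs · n) L (𝓝 (μ n))) (g : X →ᵇ ℝ) :
    Tendsto (fun i => ∫ x, g x ∂(Measure.sum fun n => w n • (μs i n : Measure X))) L
      (𝓝 (∫ x, g x ∂(Measure.sum fun n => w n • (μ n : Measure X)))) := by
  simp only [integral_sum_smul hw]
  refine tendsto_tsum_of_dominated_convergence ((ENNReal.summable_toReal hw).mul_right ‖g‖)
    (fun n => ((tendsto_iff_forall_integral_tendsto.mp (h n)) g).const_mul _)
    (Eventually.of_forall fun i n => ?_)
  rw [norm_mul, Real.norm_of_nonneg ENNReal.toReal_nonneg]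
  exact mul_le_mul_of_nonneg_left (g.norm_integral_le_norm _) ENNReal.toReal_nonneg

end Mixture

end MeasureTheory.ProbabilityMeasure

open MeasureTheory.ProbabilityMeasure

instance isProbabilityMeasure_convPow (ρ : Measure ℝ) [IsProbabilityMeasure ρ] :
    ∀ n, IsProbabilityMeasure (convPow ρ n)
  | 0 => by rw [convPow]; infer_instance
  | n + 1 => by have := isProbabilityMeasure_convPow ρ n; rw [convPow]; infer_instance

noncomputable def convPowProba (ρ : ProbabilityMeasure ℝ) (n : ℕ) : ProbabilityMeasure ℝ :=
  ⟨convPow ρ n, inferInstance⟩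

theorem continuous_convPowProba (n : ℕ) :
    Continuous fun ρ : ProbabilityMeasure ℝ => convPowProba ρ n := by
  induction n with
  | zero => exact (continuous_const : Continuous fun _ : ProbabilityMeasure ℝ => diracProba (0 : ℝ))
  | succ n ih =>
    have hsucc : (fun ρ => convPowProba ρ (n + 1)) = fun ρ => (convPowProba ρ n).conv ρ := rfl
    exact hsucc ▸ continuous_conv.comp (ih.prodMk continuous_id)

lemma sigmaX_eq_sum_map (f : ℝ → ℝ) (hf : Continuous f) (l x : ℝ) (ρ : ProbabilityMeasure ℝ) :
    sigmaX f l x ρ = Measure.sum fun n : ℕ =>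
      ENNReal.ofReal (Real.exp (-l) * l ^ n / n.factorial) •
        ((((diracProba x).conv (convPowProba ρ n)).map
          (hf.div_const ((n : ℝ) + 1)).aemeasurable : ProbabilityMeasure ℝ) : Measure ℝ) := by
  rfl

lemma sigmaTot_eq_sum_map (f : ℝ → ℝ) (hf : Continuous f) (l : ℝ) (ρ : ProbabilityMeasure ℝ) :
    sigmaTot f l ρ = Measure.sum fun n : ℕ =>
      ENNReal.ofReal (Real.exp (-l) * l ^ n / n.factorial) •
        (((convPowProba ρ (n + 1)).map
          (hf.div_const ((n : ℝ) + 1)).aemeasurable : ProbabilityMeasure ℝ) : Measure ℝ) := by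
  rfl

theorem sigma_operators_sequentially_continuous_general
    (f : ℝ → ℝ) (hf : Continuous f)
    (l : ℝ) (hl : 0 < l) (x : ℝ)
    (ρ : Measure ℝ) (ρs : ℕ → Measure ℝ)
    (hρ : IsProbabilityMeasure ρ) (hρs : ∀ n, IsProbabilityMeasure (ρs n))
    (hconv : VagueTendsto ρs ρ) :
    VagueTendsto (fun n => sigmaX f l x (ρs n)) (sigmaX f l x ρ) ∧
    VagueTendsto (fun n => sigmaTot f l (ρs n)) (sigmaTot f l ρ) := by
  let P : ProbabilityMeasure ℝ := ⟨ρ, hρ⟩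
  let Ps : ℕ → ProbabilityMeasure ℝ := fun k => ⟨ρs k, hρs k⟩
  have hweak : Tendsto Ps atTop (𝓝 P) := tendsto_of_forall_integral_hasCompactSupport_tendsto hconv
  have hpoisson : Summable fun n : ℕ => Real.exp (-l) * l ^ n / n.factorial :=
    (ProbabilityTheory.hasSum_one_poissonMeasure ⟨l, hl.le⟩).summable
  have hw : ∑' n : ℕ, ENNReal.ofReal (Real.exp (-l) * l ^ n / n.factorial) ≠ ∞ := by
    rw [← ENNReal.ofReal_tsum_of_nonneg (fun n => by positivity) hpoisson]
    exact ENNReal.ofReal_ne_top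
  have hX : ∀ n,
      Continuous fun ρ : ProbabilityMeasure ℝ => (diracProba x).conv (convPowProba ρ n) :=
    fun n => continuous_conv.comp (continuous_const.prodMk (continuous_convPowProba n))
  have hh : ∀ n : ℕ, Continuous fun y => f y / ((n : ℝ) + 1) := fun n => hf.div_const _
  refine ⟨fun φ hφ hφc => ?_, fun φ hφ hφc => ?_⟩
  · change Tendsto (fun k => ∫ y, φ y ∂(sigmaX f l x (Ps k))) atTop
      (𝓝 (∫ y, φ y ∂(sigmaX f l x P)))
    simp only [sigmaX_eq_sum_map f hf]
    exact tendsto_integral_sum_smul hw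
      (fun n => (((continuous_map (hh n)).comp (hX n)).tendsto P).comp hweak)
      (ofCompactSupport φ hφ hφc)
  · change Tendsto (fun k => ∫ y, φ y ∂(sigmaTot f l (Ps k))) atTop
      (𝓝 (∫ y, φ y ∂(sigmaTot f l P)))
    simp only [sigmaTot_eq_sum_map f hf]
    exact tendsto_integral_sum_smul hw
      (fun n => (((continuous_map (hh n)).comp (continuous_convPowProba (n + 1))).tendsto P).comp
        hweak)
      (ofCompactSupport φ hφ hφc)

theorem sigma_operators_sequentially_continuous
    (f : ℝ → ℝ) (hf : Continuous f)
    (a b : ℝ) (ha : 0 < a)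
    (hbound : ∀ x, |f x| ≤ a * Real.cosh (b * x))
    (l : ℝ) (hl : 0 < l) (x : ℝ)
    (ρ : Measure ℝ) (ρs : ℕ → Measure ℝ)
    (hρ : IsProbabilityMeasure ρ) (hρs : ∀ n, IsProbabilityMeasure (ρs n))
    (hconv : VagueTendsto ρs ρ) :
    VagueTendsto (fun n => sigmaX f l x (ρs n)) (sigmaX f l x ρ) ∧
    VagueTendsto (fun n => sigmaTot f l (ρs n)) (sigmaTot f l ρ) :=
  sigma_operators_sequentially_continuous_general f hf l hl x ρ ρs hρ hρs hconv
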